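/- The one-dimensional pre-wavelets of distinct levels are L²-orthogonal: if t ≠ t', then ∫₀¹ φ_{t,i}(x) φ_{t',i'}(x) dx = 0 for all i ∈ Ξ_t and i' ∈ Ξ_{t'}. -/

import Mathlib

open MeasureTheory intervalIntegral

/-- Hat function of level `t` at node `2^{-(t+1)} i`. -/
noncomputable def hat (t i : ℕ) (x : ℝ) : ℝ :=
  max 0 (1 - |x * 2 ^ (t + 1) - (i : ℝ)|)

/-- Index set `I_t = {1,…,2^{t+1}-1}`. -/
def Idx (t : ℕ) : Finset ℕ := Finset.Icc 1 (2 ^ (t + 1) - 1)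

/-- Hierarchical complement index set `Ξ_t` (odd indices for `t ≥ 1`, `{1}` for `t = 0`). -/
def Xi (t : ℕ) : Finset ℕ := if t = 0 then {1} else (Idx t).filter (fun i => Odd i)

/-- One-dimensional pre-wavelet `φ_{t,i}` with boundary modification. -/
noncomputable def prew (t i : ℕ) (x : ℝ) : ℝ :=
  if t = 0 then hat 0 1 x
  else if i = 1 then 9/10 * hat t 1 x - 3/5 * hat t 2 x + 1/10 * hat t 3 x
  else if i = 2 ^ (t + 1) - 1 then
    9/10 * hat t i x - 3/5 * hat t (i-1) x + 1/10 * hat t (i-2) x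
  else hat t i x - 3/5 * (hat t (i+1) x + hat t (i-1) x)
    + 1/10 * (hat t (i+2) x + hat t (i-2) x)

/-!
The hats of level `s` span `V_s = hatSpace s`, and `V_s ≤ V_{s+1}` by the two-scale relation
`tri y = tri (2y+1)/2 + tri (2y) + tri (2y-1)/2`. A pre-wavelet of level `s + 1` is orthogonal to
every hat of level `s`: writing both in level-`(s+1)` hats, the inner product becomes a finite sum
of Gram entries `∫ tri (v - d) * tri v ∈ {2/3, 1/6, 0}`, and these sums cancel. For `t' < t` the
pre-wavelet `φ_{t',i'}` lies in `V_{t'} ≤ V_{t-1}`, which is orthogonal to `φ_{t,i}`.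
-/

noncomputable def tri (y : ℝ) : ℝ := max 0 (1 - |y|)

lemma hat_apply (t i : ℕ) (x : ℝ) : hat t i x = tri (x * 2 ^ (t + 1) - i) := rfl

@[fun_prop]
lemma continuous_tri : Continuous tri := by unfold tri; fun_prop

@[fun_prop]
lemma continuous_hat (t i : ℕ) : Continuous (hat t i) := by unfold hat; fun_prop

@[fun_prop]
lemma continuous_prew (t i : ℕ) : Continuous (prew t i) := by
  unfold prew; split_ifs <;> fun_prop

lemma tri_eq_zero {y : ℝ} (h : 1 ≤ |y|) : tri y = 0 := max_eq_left (by linarith)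

lemma tri_of_nonpos {y : ℝ} (h₁ : -1 ≤ y) (h₂ : y ≤ 0) : tri y = 1 + y := by
  rw [tri, abs_of_nonpos h₂, max_eq_right (by linarith)]; ring

lemma tri_of_nonneg {y : ℝ} (h₁ : 0 ≤ y) (h₂ : y ≤ 1) : tri y = 1 - y := by
  rw [tri, abs_of_nonneg h₁, max_eq_right (by linarith)]

lemma tri_two_scale (y : ℝ) :
    tri y = tri (2 * y + 1) / 2 + tri (2 * y) + tri (2 * y - 1) / 2 := by
  unfold tri; grind

lemma support_tri_sub_subset (c : ℝ) :
    Function.support (fun u => tri (u - c)) ⊆ Set.Ioc (c - 1) (c + 1) := by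
  refine Function.support_subset_iff'.2 fun u hu => tri_eq_zero ?_
  rw [Set.mem_Ioc, not_and_or, not_lt, not_le] at hu
  exact le_abs.2 (hu.symm.imp (fun h => by linarith) fun h => by linarith)

lemma tri_sub_mul_tri_eq_zero {d : ℝ} (hd : 2 ≤ |d|) (v : ℝ) : tri (v - d) * tri v = 0 := by
  rcases le_total 1 |v| with h | h
  · rw [tri_eq_zero h, mul_zero]
  · rw [tri_eq_zero (by linarith [abs_sub_abs_le_abs_sub d v, abs_sub_comm v d]), zero_mul]

noncomputable def triGram (d : ℤ) : ℝ :=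
  if d = 0 then 2 / 3 else if d = 1 ∨ d = -1 then 1 / 6 else 0

lemma integral_tri_sub_mul_tri_eq_add (d : ℝ) :
    ∫ v, tri (v - d) * tri v =
      (∫ v in (-1)..0, tri (v - d) * tri v) + ∫ v in 0..1, tri (v - d) * tri v := by
  have hs : Function.support (fun v => tri (v - d) * tri v) ⊆ Set.Ioc (-1) 1 :=
    (Function.support_mul_subset_right _ _).trans (by simpa using support_tri_sub_subset 0)
  rw [← integral_eq_integral_of_support_subset hs, integral_add_adjacent_intervals
    (Continuous.intervalIntegrable (by fun_prop) _ _)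
    (Continuous.intervalIntegrable (by fun_prop) _ _)]

lemma integral_tri_mul_tri : ∫ v, tri v * tri v = 2 / 3 := by
  have h₁ : ∫ v in (-1)..0, tri v * tri v = 1 / 3 := by
    rw [integral_congr (g := fun v => (1 + v) ^ 2) fun v hv => by
      rw [Set.uIcc_of_le (by norm_num)] at hv
      simp only [tri_of_nonpos hv.1 hv.2, sq]]
    norm_num [integral_comp_add_left (fun v => v ^ 2)]
  have h₂ : ∫ v in (0:ℝ)..1, tri v * tri v = 1 / 3 := by
    rw [integral_congr (g := fun v => (1 - v) ^ 2) fun v hv => by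
      rw [Set.uIcc_of_le (by norm_num)] at hv
      simp only [tri_of_nonneg hv.1 hv.2, sq]]
    norm_num [integral_comp_sub_left (fun v => v ^ 2)]
  have h := integral_tri_sub_mul_tri_eq_add 0
  simp only [sub_zero] at h
  rw [h, h₁, h₂]
  norm_num

lemma integral_tri_sub_one_mul_tri : ∫ v, tri (v - 1) * tri v = 1 / 6 := by
  have h₁ : ∫ v in (-1)..0, tri (v - 1) * tri v = 0 := by
    rw [integral_congr (g := fun _ => 0) fun v hv => by
      rw [Set.uIcc_of_le (by norm_num)] at hv
      rw [tri_eq_zero (y := v - 1) (by rw [abs_of_nonpos] <;> linarith [hv.2]), zero_mul]]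
    exact intervalIntegral.integral_zero
  have h₂ : ∫ v in (0:ℝ)..1, tri (v - 1) * tri v = 1 / 6 := by
    rw [integral_congr (g := fun v => v - v ^ 2) fun v hv => by
      rw [Set.uIcc_of_le (by norm_num)] at hv
      rw [tri_of_nonneg hv.1 hv.2, tri_of_nonpos (y := v - 1) (by linarith [hv.1]) (by linarith [hv.2])]
      ring, intervalIntegral.integral_sub intervalIntegrable_id (intervalIntegrable_pow 2)]
    norm_num
  rw [integral_tri_sub_mul_tri_eq_add, h₁, h₂, zero_add]

lemma integral_tri_sub_mul_tri (d : ℤ) : ∫ v, tri (v - d) * tri v = triGram d := by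
  rcases (show d = 0 ∨ d = 1 ∨ d = -1 ∨ (2 ≤ d ∨ d ≤ -2) by omega) with rfl | rfl | rfl | hd
  · simpa [triGram] using integral_tri_mul_tri
  · simpa [triGram] using integral_tri_sub_one_mul_tri
  · rw [← integral_sub_right_eq_self _ 1]
    simpa [triGram, mul_comm] using integral_tri_sub_one_mul_tri
  · have hd' : (2 : ℝ) ≤ |(d : ℝ)| := by
      have : (2 : ℤ) ≤ |d| := by rw [le_abs]; omega
      exact_mod_cast this
    simp only [tri_sub_mul_tri_eq_zero hd', MeasureTheory.integral_zero, triGram]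
    rw [if_neg (by omega), if_neg (by omega)]

lemma integral_hat_mul_hat (t a b : ℕ) (hb : b ∈ Idx t) :
    ∫ x in (0:ℝ)..1, hat t a x * hat t b x = triGram ((a : ℤ) - b) / 2 ^ (t + 1) := by
  have hb' : b + 1 ≤ 2 ^ (t + 1) := by
    have := Nat.one_le_two_pow (n := t + 1)
    simp only [Idx, Finset.mem_Icc] at hb
    omega
  have hb₁ : (1 : ℝ) ≤ b := by simp only [Idx, Finset.mem_Icc] at hb; exact_mod_cast hb.1
  have hb₂ : (b : ℝ) + 1 ≤ 2 ^ (t + 1) := by exact_mod_cast hb'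
  have hs : Function.support (fun u => tri (u - a) * tri (u - b)) ⊆ Set.Ioc 0 (2 ^ (t + 1)) :=
    (Function.support_mul_subset_right _ _).trans <| (support_tri_sub_subset b).trans <|
      Set.Ioc_subset_Ioc (by linarith) (by linarith)
  simp only [hat_apply]
  rw [integral_comp_mul_right (fun u => tri (u - a) * tri (u - b)) (by positivity), zero_mul,
    one_mul, integral_eq_integral_of_support_subset hs, ← integral_add_right_eq_self _ (b : ℝ),
    ← integral_tri_sub_mul_tri, smul_eq_mul, inv_mul_eq_div]
  congr 2 with v
  push_cast
  ring_nf

noncomputable def hatComb {ι : Type*} [Fintype ι] (t : ℕ) (c : ι → ℝ) (a : ι → ℕ) (x : ℝ) : ℝ :=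
  ∑ j, c j * hat t (a j) x

lemma integral_hatComb_mul_hatComb {ι κ : Type*} [Fintype ι] [Fintype κ] (t : ℕ)
    (c : ι → ℝ) (a : ι → ℕ) (d : κ → ℝ) (b : κ → ℕ) (hb : ∀ k, b k ∈ Idx t) :
    ∫ x in (0:ℝ)..1, hatComb t c a x * hatComb t d b x
      = (∑ j, ∑ k, c j * d k * triGram ((a j : ℤ) - b k)) / 2 ^ (t + 1) := by
  simp only [hatComb, Finset.sum_mul_sum, Finset.sum_div]
  rw [intervalIntegral.integral_finsetSum fun j _ =>
    Continuous.intervalIntegrable (by fun_prop) _ _]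
  refine Finset.sum_congr rfl fun j _ => ?_
  rw [intervalIntegral.integral_finsetSum fun k _ =>
    Continuous.intervalIntegrable (by fun_prop) _ _]
  refine Finset.sum_congr rfl fun k _ => ?_
  rw [mul_div_assoc, ← integral_hat_mul_hat t (a j) (b k) (hb k),
    ← intervalIntegral.integral_const_mul]
  congr 1 with x
  ring

lemma hat_two_scale (s m : ℕ) :
    hat s (m + 1) = hatComb (s + 1) ![1/2, 1, 1/2] ![2 * m + 1, 2 * m + 2, 2 * m + 3] := by
  ext x
  simp only [hatComb, Fin.sum_univ_three, hat_apply, Matrix.cons_val_zero, Matrix.cons_val_one,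
    Matrix.cons_val_two, Matrix.head_cons, Matrix.tail_cons]
  rw [tri_two_scale]
  push_cast
  ring_nf

lemma two_scale_indices_mem_Idx {s m : ℕ} (hm : m + 1 ∈ Idx s) :
    ∀ k, ![2 * m + 1, 2 * m + 2, 2 * m + 3] k ∈ Idx (s + 1) := by
  have hN : 2 ^ (s + 1 + 1) = 2 * 2 ^ (s + 1) := pow_succ' 2 (s + 1)
  simp only [Idx, Finset.mem_Icc] at hm
  intro k
  fin_cases k <;> simp only [Idx, Finset.mem_Icc, Fin.isValue, Matrix.cons_val, Fin.zero_eta,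
    Fin.mk_one, Fin.reduceFinMk] <;> omega

lemma mem_Xi {t i : ℕ} (ht : t ≠ 0) : i ∈ Xi t ↔ Odd i ∧ 1 ≤ i ∧ i ≤ 2 ^ (t + 1) - 1 := by
  simp only [Xi, if_neg ht, Finset.mem_filter, Idx, Finset.mem_Icc]
  tauto

lemma prew_one {t : ℕ} (ht : t ≠ 0) :
    prew t 1 = hatComb t ![9/10, -3/5, 1/10] ![1, 2, 3] := by
  ext x
  rw [prew, if_neg ht, if_pos rfl]
  simp only [hatComb, Fin.sum_univ_three, Fin.isValue, Matrix.cons_val_zero, Matrix.cons_val_one,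
    Matrix.cons_val]
  ring

lemma prew_of_eq_last {t i : ℕ} (ht : t ≠ 0) (hi : i = 2 ^ (t + 1) - 1) :
    prew t i = hatComb t ![9/10, -3/5, 1/10] ![i, i - 1, i - 2] := by
  have h₁ : i ≠ 1 := by
    have : 2 ^ 2 ≤ 2 ^ (t + 1) := Nat.pow_le_pow_right two_pos (by omega)
    omega
  ext x
  rw [prew, if_neg ht, if_neg h₁, if_pos hi]
  simp only [hatComb, Fin.sum_univ_three, Fin.isValue, Matrix.cons_val_zero, Matrix.cons_val_one,
    Matrix.cons_val]
  ring

lemma prew_of_ne {t i : ℕ} (ht : t ≠ 0) (h₁ : i ≠ 1) (h₂ : i ≠ 2 ^ (t + 1) - 1) :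
    prew t i = hatComb t ![1/10, -3/5, 1, -3/5, 1/10] ![i - 2, i - 1, i, i + 1, i + 2] := by
  ext x
  rw [prew, if_neg ht, if_neg h₁, if_neg h₂]
  simp only [hatComb, Fin.sum_univ_five, Fin.isValue, Matrix.cons_val_zero, Matrix.cons_val_one,
    Matrix.cons_val]
  ring

lemma integral_prew_succ_mul_hat_eq_zero {s i m : ℕ} (hi : i ∈ Xi (s + 1)) (hm : m ∈ Idx s) :
    ∫ x in (0:ℝ)..1, prew (s + 1) i x * hat s m x = 0 := by
  obtain ⟨hodd, -, hi₂⟩ := (mem_Xi (Nat.succ_ne_zero s)).1 hi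
  obtain ⟨m, rfl⟩ : ∃ m', m = m' + 1 := ⟨m - 1, by simp only [Idx, Finset.mem_Icc] at hm; omega⟩
  have hm' : m + 2 ≤ 2 ^ (s + 1) := by simp only [Idx, Finset.mem_Icc] at hm; omega
  have hN : 2 ^ (s + 1 + 1) = 2 * 2 ^ (s + 1) := pow_succ' 2 (s + 1)
  rw [hat_two_scale]
  rcases (show i = 1 ∨ i = 2 ^ (s + 1 + 1) - 1 ∨ (i ≠ 1 ∧ i ≠ 2 ^ (s + 1 + 1) - 1) by omega)
    with rfl | hlast | ⟨h₁, h₂⟩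
  · rw [prew_one (Nat.succ_ne_zero s),
      integral_hatComb_mul_hatComb _ _ _ _ _ (two_scale_indices_mem_Idx hm)]
    refine div_eq_zero_iff.2 (Or.inl ?_)
    simp only [Fin.sum_univ_three, Fin.isValue, Matrix.cons_val_zero, Matrix.cons_val_one,
      Matrix.cons_val]
    rcases (show m = 0 ∨ m = 1 ∨ 2 ≤ m by omega) with h | h | h <;>
      simp (disch := omega) only [triGram, if_pos, if_neg] <;> norm_num
  · rw [prew_of_eq_last (Nat.succ_ne_zero s) hlast,
      integral_hatComb_mul_hatComb _ _ _ _ _ (two_scale_indices_mem_Idx hm)]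
    refine div_eq_zero_iff.2 (Or.inl ?_)
    simp only [Fin.sum_univ_three, Fin.isValue, Matrix.cons_val_zero, Matrix.cons_val_one,
      Matrix.cons_val]
    rcases (show m + 2 = 2 ^ (s + 1) ∨ m + 3 = 2 ^ (s + 1) ∨ m + 4 ≤ 2 ^ (s + 1) by omega)
      with h | h | h <;>
      simp (disch := omega) only [triGram, if_pos, if_neg] <;> norm_num
  · obtain ⟨c, rfl⟩ := hodd
    rw [prew_of_ne (Nat.succ_ne_zero s) h₁ h₂,
      integral_hatComb_mul_hatComb _ _ _ _ _ (two_scale_indices_mem_Idx hm)]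
    refine div_eq_zero_iff.2 (Or.inl ?_)
    simp only [Fin.sum_univ_three, Fin.sum_univ_five, Fin.isValue, Matrix.cons_val_zero,
      Matrix.cons_val_one, Matrix.cons_val]
    -- every Gram entry vanishes unless `m - 2 < c < m + 3`
    rcases (show c + 2 ≤ m ∨ c + 1 = m ∨ c = m ∨ c = m + 1 ∨ c = m + 2 ∨ m + 3 ≤ c by omega)
      with h | h | h | h | h | h <;>
      simp (disch := omega) only [triGram, if_pos, if_neg] <;> norm_num

noncomputable def hatSpace (t : ℕ) : Submodule ℝ (ℝ → ℝ) :=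
  Submodule.span ℝ (hat t '' (Idx t : Set ℕ))

lemma hatComb_mem_hatSpace {ι : Type*} [Fintype ι] {t : ℕ} (c : ι → ℝ) {a : ι → ℕ}
    (ha : ∀ j, a j ∈ Idx t) : hatComb t c a ∈ hatSpace t := by
  have : hatComb t c a = ∑ j, c j • hat t (a j) := by
    ext x
    simp only [hatComb, Finset.sum_apply, Pi.smul_apply, smul_eq_mul]
  rw [this]
  exact Submodule.sum_mem _ fun j _ =>
    Submodule.smul_mem _ _ (Submodule.subset_span ⟨a j, ha j, rfl⟩)

lemma hatSpace_le_succ (s : ℕ) : hatSpace s ≤ hatSpace (s + 1) := by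
  refine Submodule.span_le.2 ?_
  rintro _ ⟨j, hj, rfl⟩
  obtain ⟨m, rfl⟩ : ∃ m, j = m + 1 := ⟨j - 1, by simp only [Idx, Finset.coe_Icc] at hj; grind⟩
  rw [hat_two_scale]
  exact hatComb_mem_hatSpace _ (two_scale_indices_mem_Idx hj)

lemma hatSpace_mono : Monotone hatSpace := monotone_nat_of_le_succ hatSpace_le_succ

lemma prew_mem_hatSpace {t i : ℕ} (hi : i ∈ Xi t) : prew t i ∈ hatSpace t := by
  cases t with
  | zero =>
    have : prew 0 i = hat 0 1 := by ext x; rw [prew, if_pos rfl]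
    exact this ▸ Submodule.subset_span ⟨1, by simp [Idx], rfl⟩
  | succ s =>
    obtain ⟨hodd, -, hi₂⟩ := (mem_Xi (Nat.succ_ne_zero s)).1 hi
    have hN : 2 ^ (s + 1 + 1) = 2 * 2 ^ (s + 1) := pow_succ' 2 (s + 1)
    have hN' : 1 ≤ 2 ^ (s + 1) := Nat.one_le_two_pow
    rcases (show i = 1 ∨ i = 2 ^ (s + 1 + 1) - 1 ∨ (i ≠ 1 ∧ i ≠ 2 ^ (s + 1 + 1) - 1) by omega)
      with rfl | hlast | ⟨h₁, h₂⟩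
    · rw [prew_one (Nat.succ_ne_zero s)]
      refine hatComb_mem_hatSpace _ fun k => ?_
      fin_cases k <;> simp only [Idx, Finset.mem_Icc, Fin.isValue, Matrix.cons_val, Fin.zero_eta,
        Fin.mk_one, Fin.reduceFinMk] <;> omega
    · rw [prew_of_eq_last (Nat.succ_ne_zero s) hlast]
      refine hatComb_mem_hatSpace _ fun k => ?_
      fin_cases k <;> simp only [Idx, Finset.mem_Icc, Fin.isValue, Matrix.cons_val, Fin.zero_eta,
        Fin.mk_one, Fin.reduceFinMk] <;> omega
    · obtain ⟨c, rfl⟩ := hodd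
      rw [prew_of_ne (Nat.succ_ne_zero s) h₁ h₂]
      refine hatComb_mem_hatSpace _ fun k => ?_
      fin_cases k <;> simp only [Idx, Finset.mem_Icc, Fin.isValue, Matrix.cons_val, Fin.zero_eta,
        Fin.mk_one, Fin.reduceFinMk] <;> omega

lemma integral_mul_eq_zero_of_mem_span {f : ℝ → ℝ} {S : Set (ℝ → ℝ)} {a b : ℝ}
    (hS : ∀ g ∈ S, IntervalIntegrable (fun x => f x * g x) volume a b ∧
      ∫ x in a..b, f x * g x = 0)
    {g : ℝ → ℝ} (hg : g ∈ Submodule.span ℝ S) : ∫ x in a..b, f x * g x = 0 := by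
  suffices IntervalIntegrable (fun x => f x * g x) volume a b ∧ ∫ x in a..b, f x * g x = 0 from
    this.2
  induction hg using Submodule.span_induction with
  | mem g hg => exact hS g hg
  | zero => simp
  | add g₁ g₂ _ _ h₁ h₂ =>
    simp only [Pi.add_apply, mul_add]
    exact ⟨h₁.1.add h₂.1, by rw [integral_add h₁.1 h₂.1, h₁.2, h₂.2, add_zero]⟩
  | smul r g _ h =>
    simp only [Pi.smul_apply, smul_eq_mul, mul_left_comm _ r]
    exact ⟨h.1.const_mul r, by rw [intervalIntegral.integral_const_mul, h.2, mul_zero]⟩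

lemma integral_prew_mul_prew_eq_zero_of_lt {t t' i i' : ℕ} (h : t' < t) (hi : i ∈ Xi t)
    (hi' : i' ∈ Xi t') : ∫ x in (0:ℝ)..1, prew t i x * prew t' i' x = 0 := by
  obtain ⟨s, rfl⟩ : ∃ s, t = s + 1 := ⟨t - 1, by omega⟩
  refine integral_mul_eq_zero_of_mem_span ?_
    (hatSpace_mono (Nat.le_of_lt_succ h) (prew_mem_hatSpace hi'))
  rintro _ ⟨j, hj, rfl⟩
  exact ⟨Continuous.intervalIntegrable (by fun_prop) _ _,
    integral_prew_succ_mul_hat_eq_zero hi hj⟩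

theorem prewavelet_level_orth (t t' i i' : ℕ) (h : t ≠ t')
    (hi : i ∈ Xi t) (hi' : i' ∈ Xi t') :
    ∫ x in (0:ℝ)..1, prew t i x * prew t' i' x = 0 := by
  rcases h.lt_or_gt with h | h
  · simpa only [mul_comm] using integral_prew_mul_prew_eq_zero_of_lt h hi' hi
  · exact integral_prew_mul_prew_eq_zero_of_lt h hi hi'
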